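/- Let E0 > 0. Suppose γ_n > 0 with γ_n → 0, μ_n > 0, and for each n the pair (q_n, ν_n) with ν_n > 0 and −1 < q_n < 1 satisfies equation (B) of the transition system for the parameters (E0, γ_n, μ_n), with q_n → 1 and ν_n → √(E0(E0+4)). Then γ_n²/μ_n → 2(2 + E0 + √(E0(E0+4))), and the corresponding frequencies ω_n = E1(γ_n) + ν_n converge to E0 + √(E0(E0+4)). (This is the power law and limiting frequency of the ω2-ω3 bifurcation.) -/

import Mathlib

open Filter

/-- The unique positive root of `ε² + (E0+4)ε - γ² = 0`. -/
noncomputable def epsPar (E0 γ : ℝ) : ℝ :=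
  (-(E0 + 4) + Real.sqrt ((E0 + 4)^2 + 4 * γ^2)) / 2

/-- `E1 = E0 + ε`. -/
noncomputable def E1Par (E0 γ : ℝ) : ℝ := E0 + epsPar E0 γ

/-- `a = 4 + E0 + ε`. -/
noncomputable def aPar (E0 γ : ℝ) : ℝ := 4 + E0 + epsPar E0 γ

/-- Equation (A) of the transition system:
`(1-q)(1+q) = 12γ⁴ / (ν² (ν+E1) (ν+a+ε)²)`. -/
def EqA (E0 γ q ν : ℝ) : Prop :=
  (1 - q) * (1 + q) =
    12 * γ^4 / (ν^2 * (ν + E1Par E0 γ) * (ν + aPar E0 γ + epsPar E0 γ)^2)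

/-- Equation (B) of the transition system:
`(2+q)²/(1+q) = (9/2)(μ/γ²)(ν+a)²(ν+E1)/(ν(ν+a+ε))`. -/
def EqB (E0 γ μ q ν : ℝ) : Prop :=
  (2 + q)^2 / (1 + q) =
    (9/2) * (μ / γ^2) * ((ν + aPar E0 γ)^2 * (ν + E1Par E0 γ)) /
      (ν * (ν + aPar E0 γ + epsPar E0 γ))

/-!
Solving (B) for `γ²/μ` gives `(9/2) R(γ, ν) / ((2+q)²/(1+q))` with
`R(γ, ν) = (ν+a)²(ν+E1)/(ν(ν+a+ε))`. As `γ → 0` we have `ε → 0`, so by continuity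
`R → (s+E0)(s+E0+4)/s` for `s = √(E0(E0+4))`, while `(2+q)²/(1+q) → 9/2`. Since
`s² = E0(E0+4)`, the limit `(s+E0)(s+E0+4)/s` equals `2(s+E0+2)`.
-/

open Topology

noncomputable def eqBRatio (E0 γ ν : ℝ) : ℝ :=
  (ν + aPar E0 γ)^2 * (ν + E1Par E0 γ) / (ν * (ν + aPar E0 γ + epsPar E0 γ))

section Limits

variable {E0 : ℝ}

theorem epsPar_zero (hE0 : -4 ≤ E0) : epsPar E0 0 = 0 := by
  rw [epsPar, zero_pow two_ne_zero, mul_zero, add_zero, Real.sqrt_sq (by linarith)]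
  ring

theorem continuous_epsPar (E0 : ℝ) : Continuous (epsPar E0) := by
  unfold epsPar
  fun_prop

theorem tendsto_epsPar_nhds_zero (hE0 : -4 ≤ E0) : Tendsto (epsPar E0) (𝓝 0) (𝓝 0) :=
  (continuous_epsPar E0).tendsto' 0 0 (epsPar_zero hE0)

theorem tendsto_E1Par_nhds_zero (hE0 : -4 ≤ E0) : Tendsto (E1Par E0) (𝓝 0) (𝓝 E0) := by
  have h := (tendsto_epsPar_nhds_zero hE0).const_add E0
  rwa [add_zero] at h

theorem tendsto_aPar_nhds_zero (hE0 : -4 ≤ E0) : Tendsto (aPar E0) (𝓝 0) (𝓝 (4 + E0)) := by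
  have h := (tendsto_epsPar_nhds_zero hE0).const_add (4 + E0)
  rwa [add_zero] at h

theorem tendsto_eqBRatio {ι : Type*} {l : Filter ι} {γ ν : ι → ℝ} {s : ℝ}
    (hE0 : -4 ≤ E0) (hs : 0 < s) (hγ : Tendsto γ l (𝓝 0)) (hν : Tendsto ν l (𝓝 s)) :
    Tendsto (fun i => eqBRatio E0 (γ i) (ν i)) l (𝓝 ((s + E0) * (s + E0 + 4) / s)) := by
  have ha := hν.add ((tendsto_aPar_nhds_zero hE0).comp hγ)
  have hE1 := hν.add ((tendsto_E1Par_nhds_zero hE0).comp hγ)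
  have hε := (tendsto_epsPar_nhds_zero hE0).comp hγ
  have hpos : 0 < s + (4 + E0) := by linarith
  have hlim := ((ha.pow 2).mul hE1).div (hν.mul (ha.add hε)) (by positivity)
  have hval : (s + E0) * (s + E0 + 4) / s =
      (s + (4 + E0))^2 * (s + E0) / (s * (s + (4 + E0) + 0)) := by
    field_simp
    ring
  rw [hval]
  exact hlim

end Limits

theorem sq_div_eq_of_eqB {E0 γ μ q ν : ℝ} (h : EqB E0 γ μ q ν)
    (hq : (2 + q)^2 / (1 + q) ≠ 0) :
    γ^2 / μ = 9/2 * eqBRatio E0 γ ν / ((2 + q)^2 / (1 + q)) := by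
  have h' : (2 + q)^2 / (1 + q) = 9/2 * (μ / γ^2) * eqBRatio E0 γ ν := by
    rw [h, mul_div_assoc]
    rfl
  rw [h'] at hq ⊢
  -- `x / 0 = 0`, so a nonzero left side of (B) forces every factor on the right to be nonzero.
  have hμγ := right_ne_zero_of_mul (left_ne_zero_of_mul hq)
  have hR := right_ne_zero_of_mul hq
  rw [← inv_div]
  field_simp

theorem add_mul_add_div_sqrt_eq {E0 : ℝ} (hE0 : 0 < E0) :
    (√(E0 * (E0 + 4)) + E0) * (√(E0 * (E0 + 4)) + E0 + 4) / √(E0 * (E0 + 4)) =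
      2 * (2 + E0 + √(E0 * (E0 + 4))) := by
  have hs : 0 < √(E0 * (E0 + 4)) := Real.sqrt_pos.2 (by positivity)
  have hs2 : √(E0 * (E0 + 4))^2 = E0 * (E0 + 4) := Real.sq_sqrt (by positivity)
  field_simp
  linear_combination -hs2

theorem omega23_bifurcation_power_law_general
    (E0 : ℝ) (hE0 : 0 < E0) (γ μ q ν : ℕ → ℝ)
    (hγ0 : Tendsto γ atTop (nhds 0))
    (hB : ∀ n, EqB E0 (γ n) (μ n) (q n) (ν n))
    (hq1 : Tendsto q atTop (nhds 1))
    (hν : Tendsto ν atTop (nhds (Real.sqrt (E0 * (E0 + 4))))) :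
    Tendsto (fun n => (γ n)^2 / μ n) atTop
        (nhds (2 * (2 + E0 + Real.sqrt (E0 * (E0 + 4))))) ∧
    Tendsto (fun n => E1Par E0 (γ n) + ν n) atTop
        (nhds (E0 + Real.sqrt (E0 * (E0 + 4)))) := by
  have hE0' : -4 ≤ E0 := by linarith
  refine ⟨?_, ((tendsto_E1Par_nhds_zero hE0').comp hγ0).add hν⟩
  have hs : 0 < √(E0 * (E0 + 4)) := Real.sqrt_pos.2 (by positivity)
  have hqRatio : Tendsto (fun n => (2 + q n)^2 / (1 + q n)) atTop (𝓝 (9/2)) := by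
    have h := ((hq1.const_add 2).pow 2).div (hq1.const_add 1) (by norm_num)
    norm_num at h
    exact h
  have hlim := ((tendsto_eqBRatio hE0' hs hγ0 hν).const_mul (9/2)).div hqRatio (by norm_num)
  rw [mul_div_cancel_left₀ _ (show (9/2 : ℝ) ≠ 0 by norm_num),
    add_mul_add_div_sqrt_eq hE0] at hlim
  refine hlim.congr' ?_
  filter_upwards [hqRatio.eventually_ne (by norm_num : (9/2 : ℝ) ≠ 0)] with n hn
  exact (sq_div_eq_of_eqB (hB n) hn).symm

/-- power law of the ω2-ω3 bifurcation: if solutions of equation (B)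
have `q → 1` and `ν → √(E0(E0+4))`, then `γ²/μ → 2(2 + E0 + √(E0(E0+4)))` and the
frequencies `ω = E1 + ν` converge to `E0 + √(E0(E0+4))`. -/
theorem omega23_bifurcation_power_law
    (E0 : ℝ) (hE0 : 0 < E0) (γ μ q ν : ℕ → ℝ)
    (hγpos : ∀ n, 0 < γ n)
    (hγ0 : Tendsto γ atTop (nhds 0))
    (hμpos : ∀ n, 0 < μ n)
    (hνpos : ∀ n, 0 < ν n)
    (hq : ∀ n, -1 < q n ∧ q n < 1)
    (hB : ∀ n, EqB E0 (γ n) (μ n) (q n) (ν n))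
    (hq1 : Tendsto q atTop (nhds 1))
    (hν : Tendsto ν atTop (nhds (Real.sqrt (E0 * (E0 + 4))))) :
    Tendsto (fun n => (γ n)^2 / μ n) atTop
        (nhds (2 * (2 + E0 + Real.sqrt (E0 * (E0 + 4))))) ∧
    Tendsto (fun n => E1Par E0 (γ n) + ν n) atTop
        (nhds (E0 + Real.sqrt (E0 * (E0 + 4)))) :=
  omega23_bifurcation_power_law_general E0 hE0 γ μ q ν hγ0 hB hq1 hν
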